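/- For every ordinal α there exist a well-founded partial order T, a family of well-founded partial orders (P_t)_{t∈T}, and an element a of the ranked sum P with rank_P(a) = rank_T(f(a)) + rank_{P_{f(a)}}(a) + α. Concretely, take T = α + 1 and P_t = β + 1 for all t, where β is the least ordinal with α + β = β; the maximum a of P_α satisfies rank_P(a) = β + α while rank_T(f(a)) + rank_{P_{f(a)}}(a) = α + β = β. -/

import Mathlib

/-!
In a ranked sum all of whose fibres are the same well-founded order, the rank of `⟨t, x⟩` is the
natural (Hessenberg) sum `rank x ♯ rank t`: the predecessors `⟨t, y⟩` (`y < x`) and `⟨s, x⟩`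
(`s < t`) realise the recursion defining `♯`, and every other predecessor is dominated by one of
them. Take `T = α + 1` and all fibres `β + 1` with `β = α * ω`, the least fixed point of `α + ·`.
Since `β` is a power of `ω`, it is closed under `♯`, so the top element `⟨α, β⟩` has rank
`β ♯ α = β + α`, whereas `rank α + rank β = α + β = β`.
-/

open Ordinal

section RankedSum

variable {T : Type*} [PartialOrder T] {P : T → Type*} [∀ t, PartialOrder (P t)]
  [∀ t, WellFoundedLT (P t)]

/-- The primitive rank of an element of the disjoint union: its ordinal rank
inside its own component. -/
noncomputable def primRank (a : Σ t, P t) : Ordinal :=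
  IsWellFounded.rank (α := P a.1) (· < ·) a.2

/-- The ranked sum (strict) order on the disjoint union of the family `P`. -/
def RankedLT (a b : Σ t, P t) : Prop :=
  (∃ h : a.1 = b.1, (h ▸ a.2) < b.2) ∨ (a.1 < b.1 ∧ primRank a ≤ primRank b)

/-- The reflexive closure of the ranked sum order. -/
def RankedLE (a b : Σ t, P t) : Prop :=
  RankedLT a b ∨ a = b

variable [WellFoundedLT T]

theorem rankedLT_wf : WellFounded (RankedLT (T := T) (P := P)) := by
  have hsub : Subrelation (RankedLT (T := T) (P := P))
      (InvImage (Prod.Lex (· < ·) (· < ·))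
        (fun a => (IsWellFounded.rank (α := T) (· < ·) a.1, primRank a))) := by
    rintro ⟨s, x⟩ ⟨t, y⟩ (⟨h, hlt⟩ | ⟨h, _⟩)
    · dsimp at h
      subst h
      exact Prod.Lex.right _ (IsWellFounded.rank_lt_of_rel hlt)
    · exact Prod.Lex.left _ _ (IsWellFounded.rank_lt_of_rel h)
  exact Subrelation.wf hsub
    (InvImage.wf _ (WellFounded.prod_lex wellFounded_lt wellFounded_lt))

instance : IsWellFounded (Σ t, P t) RankedLT := ⟨rankedLT_wf⟩

/-- The rank of an element of the ranked sum. -/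
noncomputable def rankedRank (a : Σ t, P t) : Ordinal :=
  IsWellFounded.rank (RankedLT (T := T) (P := P)) a

end RankedSum

open Order

universe u

namespace Ordinal

noncomputable def nadd (a b : Ordinal.{u}) : Ordinal.{u} :=
  max (⨆ x : Set.Iio a, succ (nadd x.1 b)) (⨆ x : Set.Iio b, succ (nadd a x.1))
termination_by (a, b)
decreasing_by
  · exact Prod.Lex.left _ _ x.2
  · exact Prod.Lex.right _ x.2

infixl:65 " ♯ " => nadd

section NaturalSum

variable {a b c : Ordinal.{u}}

theorem nadd_def (a b : Ordinal.{u}) : a ♯ b =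
    max (⨆ x : Set.Iio a, succ (x.1 ♯ b)) (⨆ x : Set.Iio b, succ (a ♯ x.1)) := by
  rw [nadd]

theorem nadd_lt_nadd_right (h : a < b) (c : Ordinal.{u}) : a ♯ c < b ♯ c := by
  rw [nadd_def b c]
  exact (lt_succ _).trans_le <|
    (Ordinal.le_iSup (fun x : Set.Iio b => succ (x.1 ♯ c)) ⟨a, h⟩).trans (le_max_left _ _)

theorem nadd_lt_nadd_left (h : b < c) (a : Ordinal.{u}) : a ♯ b < a ♯ c := by
  rw [nadd_def a c]
  exact (lt_succ _).trans_le <|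
    (Ordinal.le_iSup (fun x : Set.Iio c => succ (a ♯ x.1)) ⟨b, h⟩).trans (le_max_right _ _)

theorem nadd_le_nadd_right (h : a ≤ b) (c : Ordinal.{u}) : a ♯ c ≤ b ♯ c := by
  rcases h.lt_or_eq with h | rfl
  exacts [(nadd_lt_nadd_right h c).le, le_rfl]

theorem nadd_le_nadd_left (h : b ≤ c) (a : Ordinal.{u}) : a ♯ b ≤ a ♯ c := by
  rcases h.lt_or_eq with h | rfl
  exacts [(nadd_lt_nadd_left h a).le, le_rfl]

theorem nadd_le_iff : a ♯ b ≤ c ↔ (∀ a' < a, a' ♯ b < c) ∧ ∀ b' < b, a ♯ b' < c := by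
  refine ⟨fun h => ⟨fun a' ha' => (nadd_lt_nadd_right ha' b).trans_le h,
    fun b' hb' => (nadd_lt_nadd_left hb' a).trans_le h⟩, fun h => ?_⟩
  rw [nadd_def]
  exact max_le (Ordinal.iSup_le fun x => succ_le_of_lt (h.1 x.1 x.2))
    (Ordinal.iSup_le fun x => succ_le_of_lt (h.2 x.1 x.2))

theorem lt_nadd_iff : a < b ♯ c ↔ (∃ b' < b, a ≤ b' ♯ c) ∨ ∃ c' < c, a ≤ b ♯ c' := by
  refine ⟨fun h => ?_, ?_⟩
  · by_contra! hn
    exact h.not_ge (nadd_le_iff.2 hn)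
  · rintro (⟨b', hb', h⟩ | ⟨c', hc', h⟩)
    exacts [h.trans_lt (nadd_lt_nadd_right hb' c), h.trans_lt (nadd_lt_nadd_left hc' b)]

theorem nadd_comm (a b : Ordinal.{u}) : a ♯ b = b ♯ a := by
  suffices h : ∀ a b : Ordinal.{u}, a ♯ b ≤ b ♯ a from (h a b).antisymm (h b a)
  intro a
  induction a using WellFoundedLT.induction with | _ a iha => ?_
  intro b
  induction b using WellFoundedLT.induction with | _ b ihb => ?_
  exact nadd_le_iff.2 ⟨fun a' ha' => (iha a' ha' b).trans_lt (nadd_lt_nadd_left ha' b),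
    fun b' hb' => (ihb b' hb').trans_lt (nadd_lt_nadd_right hb' a)⟩

@[simp] theorem nadd_zero (a : Ordinal.{u}) : a ♯ 0 = a := by
  induction a using WellFoundedLT.induction with | _ a ih => ?_
  refine le_antisymm (nadd_le_iff.2 ⟨fun a' ha' => (ih a' ha').trans_lt ha',
    fun b' hb' => (not_lt_zero hb').elim⟩) (le_of_forall_lt fun c hc => ?_)
  exact (ih c hc).symm.trans_lt (nadd_lt_nadd_right hc 0)

theorem add_le_nadd (a b : Ordinal.{u}) : a + b ≤ a ♯ b := by
  induction b using WellFoundedLT.induction with | _ b ih => ?_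
  refine le_of_forall_lt fun c hc => ?_
  rcases lt_or_ge c a with h | h
  · exact h.trans_le ((nadd_zero a).symm.trans_le (nadd_le_nadd_left zero_le a))
  · have hd : a + (c - a) = c := Ordinal.add_sub_cancel_of_le h
    have hcb : c - a < b := by rwa [← add_lt_add_iff_left a, hd]
    calc c = a + (c - a) := hd.symm
      _ ≤ a ♯ (c - a) := ih _ hcb
      _ < a ♯ b := nadd_lt_nadd_left hcb a

theorem nadd_eq_add_of_isPrincipal (hc : IsPrincipal (· ♯ ·) c) (hb : b < c) : c ♯ b = c + b := by
  induction b using WellFoundedLT.induction with | _ b ih => ?_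
  refine le_antisymm (nadd_le_iff.2 ⟨fun c' hc' => (hc hc' hb).trans_le le_self_add,
    fun b' hb' => ?_⟩) (add_le_nadd c b)
  rw [ih b' hb' (hb'.trans hb)]
  exact add_lt_add_right hb' c

end NaturalSum

section Closure

variable {a c r s : Ordinal.{u}}

theorem exists_mul_natCast_add_eq (hc : c ≠ 0) (ha : a < c * ω) :
    ∃ (k : ℕ) (r : Ordinal), r < c ∧ c * k + r = a := by
  obtain ⟨k, hk⟩ := lt_omega0.1 ((lt_mul_iff_div_lt hc).1 ha)
  exact ⟨k, a % c, mod_lt a hc, hk ▸ div_add_mod a c⟩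

theorem lt_mul_natCast_add_cases (hc : c ≠ 0) {k : ℕ} (ha : a < c * k + r) :
    (∃ m < k, ∃ r' < c, c * m + r' = a) ∨ ∃ r' < r, c * k + r' = a := by
  rcases lt_or_ge a (c * k) with h | h
  · have hk : c * k < c * ω :=
      (mul_lt_mul_iff_of_pos_left (pos_iff_ne_zero.2 hc)).2 (natCast_lt_omega0 k)
    obtain ⟨m, r', hr', rfl⟩ := exists_mul_natCast_add_eq hc (h.trans hk)
    have hmk : c * m < c * k := le_self_add.trans_lt h
    exact Or.inl ⟨m, by exact_mod_cast lt_of_mul_lt_mul_left' hmk, r', hr', rfl⟩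
  · have hd : c * k + (a - c * k) = a := Ordinal.add_sub_cancel_of_le h
    exact Or.inr ⟨a - c * k, by rwa [← add_lt_add_iff_left (c * k), hd], hd⟩

theorem nadd_lt_of_lt_mul_natCast_add (hc : IsPrincipal (· ♯ ·) c) {k l : ℕ} (hr : r < c)
    (hs : s < c) (ha : a < c * k + r)
    (ih : ∀ (m : ℕ), ∀ r' < c, c * m + r' < c * k + r →
      (c * m + r') ♯ (c * l + s) ≤ c * ↑(m + l) + (r' ♯ s)) :
    a ♯ (c * l + s) < c * ↑(k + l) + (r ♯ s) := by
  rcases lt_mul_natCast_add_cases (hr.trans_le' zero_le).ne' ha with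
    ⟨m, hm, r', hr', rfl⟩ | ⟨r', hr', rfl⟩
  · calc (c * m + r') ♯ (c * l + s) ≤ c * ↑(m + l) + (r' ♯ s) := ih m r' hr' ha
      _ < c * ↑(m + l) + c := add_lt_add_right (hc hr' hs) _
      _ = c * ↑(m + l + 1) := by rw [Nat.cast_succ, mul_add_one]
      _ ≤ c * ↑(k + l) := mul_le_mul_right (by exact_mod_cast (by omega : m + l + 1 ≤ k + l)) c
      _ ≤ c * ↑(k + l) + (r ♯ s) := le_self_add
  · calc (c * k + r') ♯ (c * l + s) ≤ c * ↑(k + l) + (r' ♯ s) := ih k r' (hr'.trans hr) ha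
      _ < c * ↑(k + l) + (r ♯ s) := add_lt_add_right (nadd_lt_nadd_right hr' s) _

theorem mul_natCast_add_nadd_le (hc : IsPrincipal (· ♯ ·) c) (k l : ℕ) (hr : r < c)
    (hs : s < c) : (c * k + r) ♯ (c * l + s) ≤ c * ↑(k + l) + (r ♯ s) := by
  suffices h : ∀ a b : Ordinal.{u}, ∀ (k l : ℕ) (r s : Ordinal.{u}), r < c → s < c →
      c * k + r = a → c * l + s = b → a ♯ b ≤ c * ↑(k + l) + (r ♯ s) from
    h _ _ k l r s hr hs rfl rfl
  intro a
  induction a using WellFoundedLT.induction with | _ a iha => ?_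
  intro b
  induction b using WellFoundedLT.induction with | _ b ihb => ?_
  rintro k l r s hr hs rfl rfl
  refine nadd_le_iff.2 ⟨fun a' ha' => ?_, fun b' hb' => ?_⟩
  · exact nadd_lt_of_lt_mul_natCast_add hc hr hs ha'
      fun m r' hr' hlt => iha _ hlt _ m l r' s hr' hs rfl rfl
  · rw [nadd_comm, nadd_comm r, add_comm k]
    refine nadd_lt_of_lt_mul_natCast_add hc hs hr hb' fun m r' hr' hlt => ?_
    rw [nadd_comm, nadd_comm r', add_comm m]
    exact ihb _ hlt k m r r' hr hr' rfl rfl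

theorem isPrincipal_nadd_mul_omega0_of_isPrincipal (hc : IsPrincipal (· ♯ ·) c) :
    IsPrincipal (· ♯ ·) (c * ω) := by
  rcases eq_or_ne c 0 with rfl | hc0
  · rw [zero_mul]
    exact isPrincipal_zero
  intro a b ha hb
  obtain ⟨k, r, hr, rfl⟩ := exists_mul_natCast_add_eq hc0 ha
  obtain ⟨l, s, hs, rfl⟩ := exists_mul_natCast_add_eq hc0 hb
  calc (c * k + r) ♯ (c * l + s) ≤ c * ↑(k + l) + (r ♯ s) := mul_natCast_add_nadd_le hc k l hr hs
    _ < c * ↑(k + l) + c := add_lt_add_right (hc hr hs) _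
    _ = c * ↑(k + l + 1) := by rw [Nat.cast_succ, mul_add_one]
    _ < c * ω := (mul_lt_mul_iff_of_pos_left (pos_iff_ne_zero.2 hc0)).2 (natCast_lt_omega0 _)

theorem isPrincipal_nadd_omega0_opow (e : Ordinal.{u}) : IsPrincipal (· ♯ ·) (ω ^ e) := by
  induction e using WellFoundedLT.induction with | _ e ih => ?_
  rcases zero_or_succ_or_isSuccLimit e with rfl | ⟨d, rfl⟩ | he
  · intro a b ha hb
    rw [opow_zero, lt_one_iff] at ha hb
    simp [ha, hb]
  · rw [opow_succ]
    exact isPrincipal_nadd_mul_omega0_of_isPrincipal (ih d (lt_succ d))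
  · intro a b ha hb
    obtain ⟨da, hda, hada⟩ := (lt_opow_of_isSuccLimit omega0_ne_zero he).1 ha
    obtain ⟨db, hdb, hbdb⟩ := (lt_opow_of_isSuccLimit omega0_ne_zero he).1 hb
    have hmono : Monotone (ω ^ · : Ordinal.{u} → Ordinal.{u}) :=
      fun _ _ => opow_le_opow_right omega0_pos
    exact (ih _ (max_lt hda hdb) (hada.trans_le (hmono (le_max_left _ _)))
      (hbdb.trans_le (hmono (le_max_right _ _)))).trans_le (hmono (max_lt hda hdb).le)

theorem isPrincipal_nadd_mul_omega0 (a : Ordinal.{u}) : IsPrincipal (· ♯ ·) (a * ω) := by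
  rcases isPrincipal_add_iff_zero_or_omega0_opow.1
      (isPrincipal_add_mul_of_isPrincipal_add a one_lt_omega0.ne' isPrincipal_add_omega0) with
    h | ⟨e, h⟩
  · rw [h]
    exact isPrincipal_zero
  · rw [← h]
    exact isPrincipal_nadd_omega0_opow e

theorem mul_omega0_nadd_self (a : Ordinal.{u}) : a * ω ♯ a = a * ω + a := by
  rcases eq_or_ne a 0 with rfl | ha
  · simp
  refine nadd_eq_add_of_isPrincipal (isPrincipal_nadd_mul_omega0 a) ?_
  simpa using (mul_lt_mul_iff_of_pos_left (pos_iff_ne_zero.2 ha)).2 one_lt_omega0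

end Closure

end Ordinal

namespace IsWellFounded

variable {α : Type u} {r : α → α → Prop} [IsWellFounded α r]

theorem exists_rel_le_of_lt_rank {a : α} {o : Ordinal.{u}} (h : o < rank r a) :
    ∃ b, r b a ∧ o ≤ rank r b := by
  rw [rank_eq, Ordinal.lt_iSup_iff] at h
  obtain ⟨⟨b, hb⟩, h⟩ := h
  exact ⟨b, hb, lt_succ_iff.1 h⟩

theorem rank_eq_of_lt_of_exists_le {f : α → Ordinal.{u}} (hlt : ∀ ⦃a b⦄, r a b → f a < f b)
    (hle : ∀ b, ∀ o < f b, ∃ a, r a b ∧ o ≤ f a) : rank r = f := by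
  funext b
  induction b using IsWellFounded.induction r with | _ b ih => ?_
  refine le_antisymm ?_ (le_of_forall_lt fun o ho => ?_)
  · rw [rank_eq]
    exact Ordinal.iSup_le fun a => succ_le_of_lt ((ih a a.2).trans_lt (hlt a.2))
  · obtain ⟨a, hab, hoa⟩ := hle b o ho
    exact hoa.trans_lt ((ih a hab).symm.trans_lt (rank_lt_of_rel hab))

end IsWellFounded

open IsWellFounded

theorem rankedRank_const {T Q : Type u} [PartialOrder T] [WellFoundedLT T] [PartialOrder Q]
    [WellFoundedLT Q] (a : Σ _ : T, Q) :
    rankedRank a = rank (α := Q) (· < ·) a.2 ♯ rank (α := T) (· < ·) a.1 := by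
  rw [rankedRank]
  refine congrFun (rank_eq_of_lt_of_exists_le (r := RankedLT)
    (f := fun a => rank (α := Q) (· < ·) a.2 ♯ rank (α := T) (· < ·) a.1) ?_ ?_) a
  · rintro ⟨s, y⟩ ⟨t, x⟩ (⟨hst, hyx⟩ | ⟨hst, hyx⟩)
    · obtain rfl : s = t := hst
      exact nadd_lt_nadd_right (rank_lt_of_rel hyx) _
    · exact (nadd_le_nadd_right hyx _).trans_lt (nadd_lt_nadd_left (rank_lt_of_rel hst) _)
  · rintro ⟨t, x⟩ o ho
    rcases lt_nadd_iff.1 ho with ⟨ξ, hξ, ho⟩ | ⟨τ, hτ, ho⟩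
    · obtain ⟨y, hyx, hξy⟩ := exists_rel_le_of_lt_rank hξ
      exact ⟨⟨t, y⟩, Or.inl ⟨rfl, hyx⟩, ho.trans (nadd_le_nadd_right hξy _)⟩
    · obtain ⟨s, hst, hτs⟩ := exists_rel_le_of_lt_rank hτ
      exact ⟨⟨s, x⟩, Or.inr ⟨hst, le_rfl⟩, ho.trans (nadd_le_nadd_left hτs _)⟩

theorem rank_Iic {γ : Ordinal.{u}} (x : Set.Iic γ) :
    rank (α := Set.Iic γ) (· < ·) x = lift.{u + 1} x.1 := by
  refine congrFun (rank_eq_of_lt_of_exists_le (fun _ _ h => lift_lt.2 h) fun b o ho => ?_) x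
  obtain ⟨o', ho', rfl⟩ := lt_lift_iff.1 ho
  exact ⟨⟨o', ho'.le.trans b.2⟩, ho', le_rfl⟩

theorem rank_toType_mk {o : Ordinal.{u}} (x : Set.Iio o) :
    rank (α := o.ToType) (· < ·) (ToType.mk x) = x.1 := by
  rw [rank_eq_typein]
  exact typein_enum _ _

/-- The error in Lemma 12 of Malicki–Rutkowski can be arbitrarily large:
for each ordinal `α`, with `T = α + 1`, all components `β + 1` (`β` the least
ordinal with `α + β = β`), the maximum `a` of `P_α` has `rank_P a = β + α` while
`rank_T (f a) + rank_{P_{f a}} a = β`. -/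
theorem overshoot_arbitrarily_large (α : Ordinal) :
    (∃ (T : Type) (_ : PartialOrder T) (_ : WellFoundedLT T)
        (P : T → Type) (_ : ∀ t, PartialOrder (P t)) (_ : ∀ t, WellFoundedLT (P t))
        (a : Σ t, P t),
        rankedRank a = IsWellFounded.rank (α := T) (· < ·) a.1 + primRank a + α) ∧
    (∀ β : Ordinal, α + β = β → (∀ γ : Ordinal, α + γ = γ → β ≤ γ) →
      ∀ a : Σ _ : Set.Iic α, Set.Iic β,
        a = ⟨⟨α, Set.self_mem_Iic⟩, ⟨β, Set.self_mem_Iic⟩⟩ →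
        rankedRank a = Ordinal.lift.{1} (β + α) ∧
        IsWellFounded.rank (α := Set.Iic α) (· < ·) a.1 + primRank a
          = Ordinal.lift.{1} β) := by
  have hfix : α + α * ω = α * ω := add_eq_right_iff_mul_omega0_le.2 le_rfl
  refine ⟨?_, fun β hβ hmin a ha => ?_⟩
  -- `Set.Iic α` lives in `Type 1`, so the first witness is built on `ToType` instead.
  · refine ⟨(α + 1).ToType, inferInstance, inferInstance, fun _ => (α * ω + 1).ToType,
      fun _ => inferInstance, fun _ => inferInstance,
      ⟨ToType.mk ⟨α, lt_add_one α⟩, ToType.mk ⟨α * ω, lt_add_one (α * ω)⟩⟩, ?_⟩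
    rw [rankedRank_const, primRank]
    simp only [rank_toType_mk]
    rw [mul_omega0_nadd_self, hfix]
  · obtain rfl : β = α * ω := (hmin _ hfix).antisymm (add_eq_right_iff_mul_omega0_le.1 hβ)
    subst ha
    rw [rankedRank_const, primRank]
    simp only [rank_Iic]
    rw [← lift_add, hβ, lift_add, lift_mul, lift_omega0, mul_omega0_nadd_self]
    exact ⟨rfl, rfl⟩
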